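/- Let n ≥ 2 be an integer and ω > 0 a real number. Then the following holds if and only if 2 ≤ n ≤ 6: for every j ∈ {1, …, n−1}, every complex root λ of the quartic R_j(λ) = λ⁴ + 2ω²λ² + ω⁴ − G_j² is purely imaginary and nonzero (i.e., Re λ = 0 and λ ≠ 0). That is, the regular n-gon relative equilibrium without central mass in the logarithm n-body problem is linearly stable if and only if n ∈ {2, 3, 4, 5, 6}. -/
import Mathlib


/-- `G_j = ω²(n² − 6nj + 6j² − 1 − (n−1)(n−5))/(6(n−1))`. -/
noncomputable def Gcoef (n j : ℕ) (ω : ℝ) : ℝ :=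
  ω ^ 2 * ((n : ℝ) ^ 2 - 6 * n * j + 6 * (j : ℝ) ^ 2 - 1
      - ((n : ℝ) - 1) * ((n : ℝ) - 5)) / (6 * ((n : ℝ) - 1))

/-- The stability quartic `R_j(λ) = λ⁴ + 2ω²λ² + ω⁴ − G_j²` for the regular
`n`-gon relative equilibrium without central mass. -/
noncomputable def R (n j : ℕ) (ω : ℝ) (lam : ℂ) : ℂ :=
  lam ^ 4 + 2 * (ω : ℂ) ^ 2 * lam ^ 2 + (ω : ℂ) ^ 4 - ((Gcoef n j ω : ℝ) : ℂ) ^ 2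

/-- A complex square root of a negative real is purely imaginary and nonzero. -/
lemma sq_neg_root' {c : ℝ} (hc : c < 0) {lam : ℂ} (h : lam ^ 2 = (c : ℂ)) :
    lam.re = 0 ∧ lam ≠ 0 := by
  have him : lam.re * lam.im = 0 := by
    have h1 := congrArg Complex.im h
    simp [pow_two, Complex.mul_im] at h1
    linarith
  have hre : lam.re * lam.re - lam.im * lam.im = c := by
    have h1 := congrArg Complex.re h
    simpa [pow_two, Complex.mul_re] using h1
  have hre0 : lam.re = 0 := by
    rcases mul_eq_zero.mp him with h0 | h0
    · exact h0
    · nlinarith [mul_self_nonneg lam.re]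
  refine ⟨hre0, fun h0 => ?_⟩
  have hc0 : ((c : ℝ) : ℂ) = 0 := by rw [← h, h0]; ring
  have : c = 0 := by exact_mod_cast hc0
  linarith

/-- All roots of `λ⁴ + 2w²λ² + w⁴ − G²` are purely imaginary and nonzero
iff `|G| < w²`. -/
lemma quartic_key (w G : ℝ) (hw : 0 < w) :
    (∀ lam : ℂ, lam ^ 4 + 2 * (w:ℂ)^2 * lam^2 + (w:ℂ)^4 - (G:ℂ)^2 = 0 →
      lam.re = 0 ∧ lam ≠ 0) ↔ |G| < w^2 := by
  constructor
  · intro h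
    by_contra hG
    push_neg at hG
    set c : ℝ := |G| - w^2 with hcdef
    have hc0 : 0 ≤ c := by simp [hcdef]; linarith
    set lam : ℂ := ((Real.sqrt c : ℝ) : ℂ) with hlam
    have hsq : lam ^ 2 = (c : ℂ) := by
      rw [hlam, ← Complex.ofReal_pow, Real.sq_sqrt hc0]
    have hroot : lam ^ 4 + 2 * (w:ℂ)^2 * lam^2 + (w:ℂ)^4 - (G:ℂ)^2 = 0 := by
      have h4 : lam ^ 4 = (c:ℂ)^2 := by rw [show lam^4 = (lam^2)^2 by ring, hsq]
      have hGabs : ((G:ℂ))^2 = ((|G| : ℝ):ℂ)^2 := by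
        rw [← Complex.ofReal_pow, ← Complex.ofReal_pow, sq_abs]
      rw [h4, hsq, hGabs, hcdef]
      push_cast
      ring
    obtain ⟨hre, hne⟩ := h lam hroot
    have hs0 : Real.sqrt c = 0 := by simpa [hlam] using hre
    exact hne (by rw [hlam, hs0]; simp)
  · intro hG lam hroot
    have hfac : (lam^2 + (w:ℂ)^2 - G) * (lam^2 + (w:ℂ)^2 + G) = 0 := by
      rw [← hroot]; ring
    obtain ⟨h1, h2⟩ := abs_lt.mp hG
    rcases mul_eq_zero.mp hfac with he | he
    · have : lam^2 = ((G - w^2 : ℝ) : ℂ) := by push_cast; linear_combination he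
      exact sq_neg_root' (by linarith) this
    · have : lam^2 = ((-G - w^2 : ℝ) : ℂ) := by push_cast; linear_combination he
      exact sq_neg_root' (by linarith) this

/-- For `2 ≤ n ≤ 6` and `1 ≤ j ≤ n − 1`, `|G_j| < ω²`. -/
lemma small_n_abs_lt (n : ℕ) (hn : 2 ≤ n) (ω : ℝ) (hω : 0 < ω) (h6 : n ≤ 6)
    (j : ℕ) (hj1 : 1 ≤ j) (hj2 : j ≤ n - 1) : |Gcoef n j ω| < ω^2 := by
  interval_cases n <;> interval_cases j <;>
    (rw [abs_lt]; unfold Gcoef; push_cast; constructor <;> nlinarith [pow_pos hω 2])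

/-- The regular `n`-gon relative equilibrium without central mass in the
logarithm `n`-body problem is linearly stable iff `n ∈ {2, 3, 4, 5, 6}`. -/
theorem ngon_no_central_mass_stable_iff (n : ℕ) (hn : 2 ≤ n) (ω : ℝ) (hω : 0 < ω) :
    (∀ j : ℕ, 1 ≤ j → j ≤ n - 1 →
        ∀ lam : ℂ, R n j ω lam = 0 → lam.re = 0 ∧ lam ≠ 0)
      ↔ n ≤ 6 := by
  have hkey : ∀ j : ℕ, (∀ lam : ℂ, R n j ω lam = 0 → lam.re = 0 ∧ lam ≠ 0)
      ↔ |Gcoef n j ω| < ω^2 := fun j => by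
    simpa [R] using quartic_key ω (Gcoef n j ω) hω
  have hw2 : 0 < ω^2 := pow_pos hω 2
  constructor
  · intro h
    by_contra hn6
    push_neg at hn6
    have h7 : (7:ℝ) ≤ (n:ℝ) := by exact_mod_cast hn6
    have habs := (hkey 3).mp (h 3 (by norm_num) (by omega))
    have hN1 : (0:ℝ) < (n:ℝ) - 1 := by linarith
    have hGeq : Gcoef n 3 ω = ω^2 * (2*(4 - (n:ℝ)))/((n:ℝ)-1) := by
      unfold Gcoef
      field_simp
      ring
    rw [hGeq] at habs
    have h1 := (abs_lt.mp habs).1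
    rw [lt_div_iff₀ hN1] at h1
    nlinarith [mul_nonneg (le_of_lt hw2) (by linarith : (0:ℝ) ≤ (n:ℝ) - 7)]
  · intro h6 j hj1 hj2
    exact (hkey j).mpr (small_n_abs_lt n hn ω hω h6 j hj1 hj2)
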